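/- Let K be a field of characteristic 0, (R, m) a parameter K-algebra, and C a smooth integral commutative K-algebra (i.e., Spec C is a smooth affine algebraic variety over K). Let A be a commutative R-algebra which is flat and m-adically complete as an R-module, together with a K-algebra isomorphism K ⊗_R A ≅ C. Then there exists an isomorphism of R-algebras R ⊗̂ C ≅ A commuting with the augmentations to C, where R ⊗̂ C denotes the m-adic completion of the R-algebra R ⊗_K C with its canonical augmentation to C. -/

import Mathlib

universe u
open TensorProduct

section CompletionOfAlgebra

variable (R : Type u) [CommRing R] (m : Ideal R)
variable (B : Type u) [CommRing B] [Algebra R B]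

/-- The transition maps `B/𝔪^{i+2}B → B/𝔪^{i+1}B` between the quotients of `B`
modulo the powers of the ideal `𝔪`. -/
noncomputable def transitionMap (i : ℕ) :
    (B ⧸ (Ideal.map (algebraMap R B) (m ^ (i + 2)))) →ₐ[R]
      (B ⧸ (Ideal.map (algebraMap R B) (m ^ (i + 1)))) :=
  Ideal.quotientMapₐ _ (AlgHom.id R B)
    (by simpa using Ideal.map_mono (Ideal.pow_le_pow_right (Nat.le_succ _)))

/-- The `𝔪`-adic completion `lim_i B/𝔪^{i+1}B` of the `R`-algebra `B`, realized as the
`R`-subalgebra of compatible families in the product of the quotients `B/𝔪^{i+1}B`. -/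
noncomputable def adicCompletionAlg :
    Subalgebra R (∀ i : ℕ, B ⧸ (Ideal.map (algebraMap R B) (m ^ (i + 1)))) where
  carrier := {f | ∀ i, transitionMap R m B i (f (i + 1)) = f i}
  mul_mem' := fun hf hg i => by simp only [Pi.mul_apply, map_mul]; rw [hf i, hg i]
  add_mem' := fun hf hg i => by simp only [Pi.add_apply, map_add]; rw [hf i, hg i]
  algebraMap_mem' := fun r i => by
    simp only [Pi.algebraMap_apply, AlgHom.commutes]

end CompletionOfAlgebra

section Aux

variable {R : Type u} [CommRing R] {B : Type u} [CommRing B] [Algebra R B]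

theorem transitionMap_mk (m : Ideal R) (i : ℕ) (b : B) :
    transitionMap R m B i (Ideal.Quotient.mk _ b) = Ideal.Quotient.mk _ b := by
  simp [transitionMap, Ideal.quotientMapₐ, Ideal.quotientMap_mk]

theorem mem_smulTop_iff (I : Ideal R) (x : B) :
    x ∈ I • (⊤ : Submodule R B) ↔ x ∈ Ideal.map (algebraMap R B) I := by
  rw [Ideal.smul_top_eq_map]; rfl

theorem mul_mem_smulTop (I : Ideal R) (a : B) {x : B} (hx : x ∈ I • (⊤ : Submodule R B)) :
    a * x ∈ I • (⊤ : Submodule R B) := by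
  rw [mem_smulTop_iff] at hx ⊢
  exact Ideal.mul_mem_left _ a hx

theorem smul_mem_smulTop {I J : Ideal R} {r : R} (hr : r ∈ J) {x : B}
    (hx : x ∈ I • (⊤ : Submodule R B)) : r • x ∈ (J * I) • (⊤ : Submodule R B) := by
  rw [mul_smul]; exact Submodule.smul_mem_smul hr hx

/-- The canonical map from `B` to its completion. -/
noncomputable def toCompletion (m : Ideal R) : B →ₐ[R] adicCompletionAlg R m B :=
  AlgHom.codRestrict
    (Pi.algHom R (fun i => B ⧸ (Ideal.map (algebraMap R B) (m ^ (i + 1))))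
      (fun i => Ideal.Quotient.mkₐ R _)) _
    (fun b i => by simpa using transitionMap_mk m i b)

theorem toCompletion_apply (m : Ideal R) (b : B) (i : ℕ) :
    ((toCompletion m b : adicCompletionAlg R m B) : ∀ i : ℕ,
        B ⧸ (Ideal.map (algebraMap R B) (m ^ (i + 1)))) i = Ideal.Quotient.mk _ b := rfl

theorem toCompletion_bijective (m : Ideal R) [IsAdicComplete m B] :
    Function.Bijective (toCompletion (B := B) m) := by
  constructor
  · intro x y hxy
    rw [← sub_eq_zero]
    refine IsHausdorff.haus (IsAdicComplete.toIsHausdorff (I := m) (M := B)) (x - y) fun n => ?_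
    rw [SModEq.zero]
    cases n with
    | zero => simp [Ideal.map_top]
    | succ n =>
      have h := congrFun (congrArg Subtype.val hxy) n
      simp only [toCompletion_apply] at h
      rw [mem_smulTop_iff]
      simpa [Ideal.Quotient.mk_eq_mk_iff_sub_mem] using h
  · rintro ⟨f, hf⟩
    choose a ha using fun i => Ideal.Quotient.mk_surjective (f i)
    have hstep : ∀ i, a (i + 1) - a i ∈ Ideal.map (algebraMap R B) (m ^ (i + 1)) := by
      intro i
      have := hf i
      rw [← ha (i + 1), transitionMap_mk, ← ha i, Ideal.Quotient.mk_eq_mk_iff_sub_mem] at this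
      exact this
    have hcau : ∀ {p q : ℕ}, p ≤ q → a p ≡ a q [SMOD (m ^ p • ⊤ : Submodule R B)] := by
      intro p q hpq
      induction q with
      | zero =>
        obtain rfl := Nat.le_zero.mp hpq
        rfl
      | succ q ih =>
        rcases Nat.lt_or_ge p (q+1) with h | h
        · have hpq' : p ≤ q := Nat.lt_succ_iff.mp h
          refine (ih hpq').trans ?_
          rw [SModEq.sub_mem]
          have : a q - a (q+1) ∈ Ideal.map (algebraMap R B) (m ^ (q + 1)) := by
            simpa using (Ideal.map (algebraMap R B) (m ^ (q + 1))).neg_mem (hstep q)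
          rw [mem_smulTop_iff]
          exact Ideal.map_mono (Ideal.pow_le_pow_right (by omega)) this
        · have : p = q + 1 := le_antisymm hpq h
          subst this; rfl
    obtain ⟨L, hL⟩ := IsPrecomplete.prec (IsAdicComplete.toIsPrecomplete (I := m) (M := B)) hcau
    refine ⟨L, ?_⟩
    apply Subtype.ext
    funext i
    rw [toCompletion_apply]
    show _ = f i
    rw [← ha i, Ideal.Quotient.mk_eq_mk_iff_sub_mem]
    have h1 : a (i+1) - L ∈ Ideal.map (algebraMap R B) (m ^ (i + 1)) := by
      have := SModEq.sub_mem.mp (hL (i+1))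
      rw [mem_smulTop_iff] at this
      exact this
    have h2 := hstep i
    have : L - a i = (a (i+1) - a i) - (a (i+1) - L) := by ring
    rw [this]
    exact Submodule.sub_mem _ h2 h1
set_option linter.unusedSectionVars false

section Main

variable {K : Type u} [Field K]
  {R : Type u} [CommRing R] [Algebra K R] [IsLocalRing R]
  {C : Type u} [CommRing C] [Algebra K C]
  {A : Type u} [CommRing A] [Algebra R A] [Algebra K A] [IsScalarTower K R A]

local notation "mx" => IsLocalRing.maximalIdeal R

theorem mul_mem_smulTop_mul {I J : Ideal R} {a b : A} (ha : a ∈ I • (⊤ : Submodule R A))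
    (hb : b ∈ J • (⊤ : Submodule R A)) : a * b ∈ (I * J) • (⊤ : Submodule R A) := by
  refine Submodule.smul_induction_on ha ?_ ?_
  · intro r hr z _
    rw [smul_mul_assoc]
    exact smul_mem_smulTop hr (mul_mem_smulTop _ z hb)
  · intro x y hx hy
    rw [add_mul]
    exact Submodule.add_mem _ hx hy

/-- The `K`-algebra version of the transition map. -/
noncomputable def piK (i : ℕ) :
    (A ⧸ (Ideal.map (algebraMap R A) (mx ^ (i + 2)))) →ₐ[K]
      (A ⧸ (Ideal.map (algebraMap R A) (mx ^ (i + 1)))) :=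
  Ideal.quotientMapₐ _ (AlgHom.id K A)
    (by simpa using Ideal.map_mono (Ideal.pow_le_pow_right (Nat.le_succ _)))

theorem piK_mk (i : ℕ) (a : A) :
    piK (K := K) (R := R) (A := A) i (Ideal.Quotient.mk _ a) = Ideal.Quotient.mk _ a := by
  simp [piK, Ideal.quotientMapₐ, Ideal.quotientMap_mk]

theorem piK_surjective (i : ℕ) :
    Function.Surjective (piK (K := K) (R := R) (A := A) i) := fun x => by
  obtain ⟨a, rfl⟩ := Ideal.Quotient.mk_surjective x
  exact ⟨Ideal.Quotient.mk _ a, piK_mk i a⟩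

theorem piK_ker_nilpotent (i : ℕ) :
    IsNilpotent (RingHom.ker ((piK (K := K) (R := R) (A := A) i) :
      (A ⧸ (Ideal.map (algebraMap R A) (mx ^ (i + 2)))) →+*
      (A ⧸ (Ideal.map (algebraMap R A) (mx ^ (i + 1)))))) := by
  refine ⟨2, ?_⟩
  have hgoal : RingHom.ker ((piK (K := K) (R := R) (A := A) i) :
        (A ⧸ (Ideal.map (algebraMap R A) (mx ^ (i + 2)))) →+*
        (A ⧸ (Ideal.map (algebraMap R A) (mx ^ (i + 1))))) *
      RingHom.ker ((piK (K := K) (R := R) (A := A) i) :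
        (A ⧸ (Ideal.map (algebraMap R A) (mx ^ (i + 2)))) →+*
        (A ⧸ (Ideal.map (algebraMap R A) (mx ^ (i + 1))))) ≤ ⊥ := by
    rw [Ideal.mul_le]
    intro x hx y hy
    obtain ⟨a, rfl⟩ := Ideal.Quotient.mk_surjective x
    obtain ⟨b, rfl⟩ := Ideal.Quotient.mk_surjective y
    rw [RingHom.mem_ker] at hx hy
    have hx2 : piK (K := K) (R := R) (A := A) i (Ideal.Quotient.mk _ a) = 0 := hx
    have hy2 : piK (K := K) (R := R) (A := A) i (Ideal.Quotient.mk _ b) = 0 := hy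
    rw [piK_mk, Ideal.Quotient.eq_zero_iff_mem] at hx2 hy2
    have hx' : a ∈ mx ^ (i + 1) • (⊤ : Submodule R A) := by
      rw [mem_smulTop_iff]; exact hx2
    have hy' : b ∈ mx ^ (i + 1) • (⊤ : Submodule R A) := by
      rw [mem_smulTop_iff]; exact hy2
    have hab : a * b ∈ (mx ^ (i + 2)) • (⊤ : Submodule R A) := by
      have := mul_mem_smulTop_mul hx' hy'
      rw [← pow_add] at this
      exact Submodule.smul_mono_left (Ideal.pow_le_pow_right (by omega)) this
    rw [Ideal.mem_bot, ← map_mul, Ideal.Quotient.eq_zero_iff_mem]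
    rw [mem_smulTop_iff] at hab
    exact hab
  rw [pow_two, Ideal.zero_eq_bot]
  exact le_bot_iff.mp hgoal

variable (ψ : A →ₐ[K] C)

theorem g0ker (hψker : ∀ x : A, ψ x = 0 ↔ x ∈ mx • (⊤ : Submodule R A)) :
    RingHom.ker ψ = Ideal.map (algebraMap R A) (mx ^ (0 + 1)) := by
  ext x
  rw [RingHom.mem_ker, hψker, zero_add, pow_one, mem_smulTop_iff]

/-- The base map `C →ₐ[K] A ⧸ 𝔪A`, inverse to the isomorphism induced by `ψ`. -/
noncomputable def g0 (hψsurj : Function.Surjective ψ)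
    (hψker : ∀ x : A, ψ x = 0 ↔ x ∈ mx • (⊤ : Submodule R A)) :
    C →ₐ[K] (A ⧸ (Ideal.map (algebraMap R A) (mx ^ (0 + 1)))) :=
  (Ideal.quotientEquivAlgOfEq K (g0ker ψ hψker)).toAlgHom.comp
    (Ideal.quotientKerAlgEquivOfSurjective hψsurj).symm.toAlgHom

theorem g0_psi (hψsurj : Function.Surjective ψ)
    (hψker : ∀ x : A, ψ x = 0 ↔ x ∈ mx • (⊤ : Submodule R A)) (a : A) :
    g0 ψ hψsurj hψker (ψ a) = Ideal.Quotient.mk _ a := by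
  have h1 : (Ideal.quotientKerAlgEquivOfSurjective hψsurj).symm (ψ a)
      = Ideal.Quotient.mk (RingHom.ker ψ) a := by
    rw [AlgEquiv.symm_apply_eq]
    simp [Ideal.quotientKerAlgEquivOfSurjective, Ideal.quotientKerAlgEquivOfRightInverse,
      RingHom.quotientKerEquivOfRightInverse, RingHom.kerLift_mk]
    exact (RingHom.kerLift_mk (ψ : A →+* C) a).symm
  simp [g0, h1, Ideal.quotientEquivAlgOfEq_mk]

end Main
section Main2
set_option linter.unusedSectionVars false

variable {K : Type u} [Field K]
  {R : Type u} [CommRing R] [Algebra K R] [IsLocalRing R]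
  {C : Type u} [CommRing C] [Algebra K C]
  {A : Type u} [CommRing A] [Algebra R A] [Algebra K A] [IsScalarTower K R A]

variable (ψ : A →ₐ[K] C) (hψsurj : Function.Surjective ψ)
  (hψker : ∀ x : A, ψ x = 0 ↔ x ∈ (IsLocalRing.maximalIdeal R) • (⊤ : Submodule R A))
  [Algebra.FormallySmooth K C]

/-- The compatible system of lifts `C →ₐ[K] A ⧸ 𝔪^{i+1} A`. -/
noncomputable def gSeq : ∀ i : ℕ, C →ₐ[K] (A ⧸ (Ideal.map (algebraMap R A) ((IsLocalRing.maximalIdeal R) ^ (i + 1))))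
  | 0 => g0 ψ hψsurj hψker
  | (i + 1) => Algebra.FormallySmooth.liftOfSurjective (gSeq i)
      (piK (K := K) (R := R) (A := A) i) (piK_surjective i) (piK_ker_nilpotent i)

theorem gSeq_compat (i : ℕ) (c : C) :
    transitionMap R (IsLocalRing.maximalIdeal R) A i (gSeq ψ hψsurj hψker (i + 1) c) = gSeq ψ hψsurj hψker i c := by
  have h := Algebra.FormallySmooth.liftOfSurjective_apply (gSeq ψ hψsurj hψker i)
    (piK (K := K) (R := R) (A := A) i) (piK_surjective i) (piK_ker_nilpotent i) c
  have hdef : gSeq ψ hψsurj hψker (i + 1) c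
      = Algebra.FormallySmooth.liftOfSurjective (gSeq ψ hψsurj hψker i)
        (piK (K := K) (R := R) (A := A) i) (piK_surjective i) (piK_ker_nilpotent i) c := rfl
  obtain ⟨a, ha⟩ := Ideal.Quotient.mk_surjective (gSeq ψ hψsurj hψker (i + 1) c)
  rw [← ha, transitionMap_mk]
  rw [hdef] at ha
  rw [← ha, piK_mk] at h
  exact h

theorem gSeq_mem (c : C) :
    (fun i => gSeq ψ hψsurj hψker i c) ∈ adicCompletionAlg R (IsLocalRing.maximalIdeal R) A :=
  fun i => gSeq_compat ψ hψsurj hψker i c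

variable [IsAdicComplete (IsLocalRing.maximalIdeal R) A]

/-- The limit lift `C → A`. -/
noncomputable def Gfun (c : C) : A :=
  (AlgEquiv.ofBijective (toCompletion (B := A) (IsLocalRing.maximalIdeal R)) (toCompletion_bijective (IsLocalRing.maximalIdeal R))).symm
    ⟨_, gSeq_mem ψ hψsurj hψker c⟩

theorem mk_Gfun (c : C) (i : ℕ) :
    Ideal.Quotient.mk (Ideal.map (algebraMap R A) ((IsLocalRing.maximalIdeal R) ^ (i + 1))) (Gfun ψ hψsurj hψker c)
      = gSeq ψ hψsurj hψker i c := by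
  have h := (AlgEquiv.ofBijective (toCompletion (B := A) (IsLocalRing.maximalIdeal R))
    (toCompletion_bijective (IsLocalRing.maximalIdeal R))).apply_symm_apply ⟨_, gSeq_mem ψ hψsurj hψker c⟩
  exact congrFun (congrArg Subtype.val h) i

theorem mk_injective {x y : A}
    (h : ∀ i : ℕ, Ideal.Quotient.mk (Ideal.map (algebraMap R A) ((IsLocalRing.maximalIdeal R) ^ (i + 1))) x
      = Ideal.Quotient.mk _ y) : x = y :=
  (toCompletion_bijective (B := A) (IsLocalRing.maximalIdeal R)).injective (Subtype.ext (funext fun i => h i))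

/-- The limit lift as an algebra homomorphism. -/
noncomputable def Gmap : C →ₐ[K] A where
  toFun := Gfun ψ hψsurj hψker
  map_one' := mk_injective fun i => by rw [mk_Gfun, map_one, map_one]
  map_mul' x y := mk_injective fun i => by
    rw [mk_Gfun, map_mul, map_mul, mk_Gfun, mk_Gfun]
  map_zero' := mk_injective fun i => by rw [mk_Gfun, map_zero, map_zero]
  map_add' x y := mk_injective fun i => by
    rw [mk_Gfun, map_add, map_add, mk_Gfun, mk_Gfun]
  commutes' k := mk_injective fun i => by
    rw [mk_Gfun, AlgHom.commutes]
    rfl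

theorem Gmap_apply (c : C) : Gmap ψ hψsurj hψker c = Gfun ψ hψsurj hψker c := rfl

theorem psi_Gfun (c : C) : ψ (Gfun ψ hψsurj hψker c) = c := by
  obtain ⟨a, rfl⟩ := hψsurj c
  have h0 : Ideal.Quotient.mk (Ideal.map (algebraMap R A) ((IsLocalRing.maximalIdeal R) ^ (0 + 1)))
      (Gfun ψ hψsurj hψker (ψ a)) = Ideal.Quotient.mk _ a := by
    rw [mk_Gfun]
    exact g0_psi ψ hψsurj hψker a
  have hmem : Gfun ψ hψsurj hψker (ψ a) - a ∈ (IsLocalRing.maximalIdeal R) • (⊤ : Submodule R A) := by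
    have := (Ideal.Quotient.mk_eq_mk_iff_sub_mem _ _).mp h0
    rw [mem_smulTop_iff]
    simpa using this
  have hz := (hψker _).mpr hmem
  rw [map_sub, sub_eq_zero] at hz
  exact hz

end Main2
section MuLemmas
set_option linter.unusedSectionVars false

variable {R : Type u} [CommRing R] {M : Type u} [AddCommGroup M] [Module R M]

theorem smulTop_map {N : Type u} [AddCommGroup N] [Module R N]
    (f : M →ₗ[R] N) {I : Ideal R} {x : M} (hx : x ∈ I • (⊤ : Submodule R M)) :
    f x ∈ I • (⊤ : Submodule R N) := by
  refine Submodule.smul_induction_on hx (fun r hr y _ => ?_)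
    (fun a b ha hb => by rw [map_add]; exact Submodule.add_mem _ ha hb)
  rw [map_smul]
  exact Submodule.smul_mem_smul hr trivial

variable (I : Ideal R)

/-- The multiplication map `I ⊗ M → M`. -/
noncomputable def muMap : (I ⊗[R] M) →ₗ[R] M :=
  (TensorProduct.lid R M).toLinearMap ∘ₗ LinearMap.rTensor M (Submodule.subtype I)

@[simp] theorem muMap_tmul (i : I) (x : M) : muMap I (i ⊗ₜ[R] x) = (i : R) • x := by
  simp [muMap]

theorem muMap_surj {x : M} (hx : x ∈ I • (⊤ : Submodule R M)) :
    ∃ ξ : I ⊗[R] M, muMap I ξ = x := by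
  refine Submodule.smul_induction_on hx ?_ ?_
  · intro r hr y _
    exact ⟨(⟨r, hr⟩ : I) ⊗ₜ[R] y, by simp⟩
  · rintro a b ⟨ξ, hξ⟩ ⟨η, hη⟩
    exact ⟨ξ + η, by rw [map_add, hξ, hη]⟩

theorem muMap_range (ξ : I ⊗[R] M) : muMap I ξ ∈ I • (⊤ : Submodule R M) := by
  induction ξ using TensorProduct.induction_on with
  | zero => simpa using Submodule.zero_mem _
  | tmul i x => rw [muMap_tmul]; exact Submodule.smul_mem_smul i.2 trivial
  | add x y hx hy => rw [map_add]; exact Submodule.add_mem _ hx hy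

theorem muMap_smul_mem {J : Ideal R} {ξ : I ⊗[R] M}
    (hξ : ξ ∈ J • (⊤ : Submodule R (I ⊗[R] M))) :
    muMap I ξ ∈ (J * I) • (⊤ : Submodule R M) := by
  refine Submodule.smul_induction_on hξ ?_ ?_
  · intro r hr w _
    rw [map_smul, mul_smul]
    exact Submodule.smul_mem_smul hr (muMap_range I w)
  · intro a b ha hb
    rw [map_add]
    exact Submodule.add_mem _ ha hb

theorem exists_smulTop_tensor {J : Ideal R} {y : M}
    (hy : y ∈ (J * I) • (⊤ : Submodule R M)) :
    ∃ η ∈ J • (⊤ : Submodule R (I ⊗[R] M)), muMap I η = y := by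
  rw [mul_smul] at hy
  refine Submodule.smul_induction_on hy ?_ ?_
  · intro r hr z hz
    obtain ⟨ξ, hξ⟩ := muMap_surj I hz
    exact ⟨r • ξ, Submodule.smul_mem_smul hr trivial, by rw [map_smul, hξ]⟩
  · rintro a b ⟨ξ, hξm, hξ⟩ ⟨η, hηm, hη⟩
    exact ⟨ξ + η, Submodule.add_mem _ hξm hηm, by rw [map_add, hξ, hη]⟩

theorem muMap_injective [Module.Flat R M] : Function.Injective (muMap (M := M) I) := by
  have h1 : Function.Injective (LinearMap.rTensor M (Submodule.subtype I)) :=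
    Module.Flat.rTensor_preserves_injective_linearMap _ (Submodule.injective_subtype I)
  rw [muMap, LinearMap.coe_comp, LinearEquiv.coe_coe]
  exact (TensorProduct.lid R M).injective.comp h1

theorem tmul_mem_smulTop {J : Ideal R} (i : I) {e : M}
    (he : e ∈ J • (⊤ : Submodule R M)) :
    i ⊗ₜ[R] e ∈ J • (⊤ : Submodule R (I ⊗[R] M)) := by
  refine Submodule.smul_induction_on he ?_ ?_
  · intro r hr y _
    rw [TensorProduct.tmul_smul]
    exact Submodule.smul_mem_smul hr trivial
  · intro a b ha hb
    rw [TensorProduct.tmul_add]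
    exact Submodule.add_mem _ ha hb

end MuLemmas
section Main3
set_option linter.unusedSectionVars false

variable {K : Type u} [Field K]
  {R : Type u} [CommRing R] [Algebra K R] [IsLocalRing R]
  {C : Type u} [CommRing C] [Algebra K C]
  {A : Type u} [CommRing A] [Algebra R A] [Algebra K A] [IsScalarTower K R A]
  (ψ : A →ₐ[K] C) (hψsurj : Function.Surjective ψ)
  (hψker : ∀ x : A, ψ x = 0 ↔ x ∈ (IsLocalRing.maximalIdeal R) • (⊤ : Submodule R A))
  [Algebra.FormallySmooth K C] [IsAdicComplete (IsLocalRing.maximalIdeal R) A]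

/-- The `R`-algebra homomorphism `R ⊗[K] C → A`. -/
noncomputable def Phi0 : (R ⊗[K] C) →ₐ[R] A :=
  Algebra.TensorProduct.lift (Algebra.ofId R A) (Gmap ψ hψsurj hψker)
    (fun _ _ => Commute.all _ _)

theorem Phi0_tmul (r : R) (c : C) :
    Phi0 ψ hψsurj hψker (r ⊗ₜ[K] c) = algebraMap R A r * Gfun ψ hψsurj hψker c := by
  simp [Phi0, Algebra.TensorProduct.lift_tmul]
  rfl

theorem exists_res (hres : Function.Bijective (algebraMap K (IsLocalRing.ResidueField R)))
    (r : R) : ∃ k : K, r - algebraMap K R k ∈ IsLocalRing.maximalIdeal R := by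
  obtain ⟨k, hk⟩ := hres.2 (IsLocalRing.residue R r)
  refine ⟨k, ?_⟩
  have h2 : algebraMap K (IsLocalRing.ResidueField R) k
      = IsLocalRing.residue R (algebraMap K R k) := rfl
  have h3 : IsLocalRing.residue R (r - algebraMap K R k) = 0 := by
    rw [map_sub, ← hk, h2, sub_self]
  exact Ideal.Quotient.eq_zero_iff_mem.mp h3

include hψker in
theorem psi_rsmul (hres : Function.Bijective (algebraMap K (IsLocalRing.ResidueField R)))
    (r : R) (a : A) :
    ∃ k : K, (r - algebraMap K R k ∈ IsLocalRing.maximalIdeal R) ∧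
      ψ (algebraMap R A r * a) = k • ψ a := by
  obtain ⟨k, hk⟩ := exists_res hres r
  refine ⟨k, hk, ?_⟩
  have hsplit : algebraMap R A r
      = algebraMap K A k + algebraMap R A (r - algebraMap K R k) := by
    rw [map_sub, ← IsScalarTower.algebraMap_apply K R A]
    ring
  rw [hsplit, add_mul, map_add]
  have h1 : ψ (algebraMap K A k * a) = k • ψ a := by
    rw [map_mul, AlgHom.commutes, Algebra.smul_def]
  have h2 : ψ (algebraMap R A (r - algebraMap K R k) * a) = 0 := by
    apply (hψker _).mpr
    rw [mul_comm]
    exact mul_mem_smulTop _ a (mem_smulTop_iff _ _ |>.mpr (Ideal.mem_map_of_mem _ hk))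
  rw [h1, h2, add_zero]

theorem key0 (hres : Function.Bijective (algebraMap K (IsLocalRing.ResidueField R)))
    (t : R ⊗[K] C) :
    t - (1 : R) ⊗ₜ[K] (ψ (Phi0 ψ hψsurj hψker t))
      ∈ (IsLocalRing.maximalIdeal R) • (⊤ : Submodule R (R ⊗[K] C)) := by
  induction t using TensorProduct.induction_on with
  | zero => simpa using Submodule.zero_mem _
  | tmul r c =>
    obtain ⟨k, hk, hψr⟩ := psi_rsmul ψ hψker hres r (Gfun ψ hψsurj hψker c)
    rw [Phi0_tmul, hψr, psi_Gfun]
    have h1 : (1 : R) ⊗ₜ[K] (k • c) = (algebraMap K R k) ⊗ₜ[K] c := by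
      rw [TensorProduct.tmul_smul, TensorProduct.smul_tmul', Algebra.algebraMap_eq_smul_one]
    rw [h1, ← TensorProduct.sub_tmul]
    have h2 : (r - algebraMap K R k) ⊗ₜ[K] c
        = (r - algebraMap K R k) • ((1 : R) ⊗ₜ[K] c) := by
      rw [TensorProduct.smul_tmul', smul_eq_mul, mul_one]
    rw [h2]
    exact Submodule.smul_mem_smul hk trivial
  | add x y hx hy =>
    rw [map_add, map_add, TensorProduct.tmul_add]
    have h := Submodule.add_mem _ hx hy
    convert h using 1
    ring

theorem inj_base (hres : Function.Bijective (algebraMap K (IsLocalRing.ResidueField R)))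
    (t : R ⊗[K] C)
    (ht : Phi0 ψ hψsurj hψker t ∈ (IsLocalRing.maximalIdeal R) • (⊤ : Submodule R A)) :
    t ∈ (IsLocalRing.maximalIdeal R) • (⊤ : Submodule R (R ⊗[K] C)) := by
  have h0 := key0 ψ hψsurj hψker hres t
  rw [(hψker _).mpr ht] at h0
  simpa using h0

theorem surj_base (a : A) :
    a - Phi0 ψ hψsurj hψker ((1 : R) ⊗ₜ[K] (ψ a))
      ∈ (IsLocalRing.maximalIdeal R) • (⊤ : Submodule R A) := by
  apply (hψker _).mp
  rw [map_sub, Phi0_tmul, map_one, one_mul, psi_Gfun, sub_self]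

theorem surj_mod (n : ℕ) (a : A) :
    ∃ t : R ⊗[K] C, a - Phi0 ψ hψsurj hψker t
      ∈ ((IsLocalRing.maximalIdeal R) ^ (n + 1)) • (⊤ : Submodule R A) := by
  induction n generalizing a with
  | zero =>
    exact ⟨(1 : R) ⊗ₜ[K] (ψ a), by simpa [pow_one] using surj_base ψ hψsurj hψker a⟩
  | succ n ih =>
    obtain ⟨t, ht⟩ := ih a
    have claim : ∀ d ∈ ((IsLocalRing.maximalIdeal R) ^ (n + 1)) • (⊤ : Submodule R A),
        ∃ s : R ⊗[K] C, d - Phi0 ψ hψsurj hψker s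
          ∈ ((IsLocalRing.maximalIdeal R) ^ (n + 2)) • (⊤ : Submodule R A) := by
      intro d hd
      refine Submodule.smul_induction_on hd ?_ ?_
      · intro r hr x _
        refine ⟨r • ((1 : R) ⊗ₜ[K] (ψ x)), ?_⟩
        rw [map_smul, ← smul_sub]
        have h := smul_mem_smulTop (B := A) hr (surj_base ψ hψsurj hψker x)
        rwa [← pow_succ] at h
      · rintro x y ⟨s1, h1⟩ ⟨s2, h2⟩
        refine ⟨s1 + s2, ?_⟩
        rw [map_add]
        have h := Submodule.add_mem _ h1 h2
        convert h using 1
        ring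
    obtain ⟨s, hs⟩ := claim _ ht
    refine ⟨t + s, ?_⟩
    rw [map_add]
    convert hs using 1
    ring

end Main3
section Main4
set_option linter.unusedSectionVars false

variable {K : Type u} [Field K]
  {R : Type u} [CommRing R] [Algebra K R] [IsLocalRing R]
  {C : Type u} [CommRing C] [Algebra K C]
  {A : Type u} [CommRing A] [Algebra R A] [Algebra K A] [IsScalarTower K R A]
  (ψ : A →ₐ[K] C) (hψsurj : Function.Surjective ψ)
  (hψker : ∀ x : A, ψ x = 0 ↔ x ∈ (IsLocalRing.maximalIdeal R) • (⊤ : Submodule R A))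
  (hres : Function.Bijective (algebraMap K (IsLocalRing.ResidueField R)))
  [Algebra.FormallySmooth K C] [IsAdicComplete (IsLocalRing.maximalIdeal R) A]

/-- The one-sided inverse of `id ⊗ Φ₀` modulo `𝔪`. -/
noncomputable def betaFun (I : Ideal R) :
    (I ⊗[R] A) →ₗ[R] ((I ⊗[R] (R ⊗[K] C)) ⧸
      ((IsLocalRing.maximalIdeal R) • (⊤ : Submodule R (I ⊗[R] (R ⊗[K] C))))) :=
  TensorProduct.lift
    { toFun := fun i =>
        { toFun := fun a => Submodule.Quotient.mk (i ⊗ₜ[R] ((1 : R) ⊗ₜ[K] (ψ a)))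
          map_add' := fun x y => by
            rw [map_add, TensorProduct.tmul_add, TensorProduct.tmul_add,
              ← Submodule.Quotient.mk_add]
          map_smul' := fun r a => by
            obtain ⟨k, hk, hψr⟩ := psi_rsmul ψ hψker hres r a
            rw [RingHom.id_apply]
            have h1 : ψ (r • a) = k • ψ a := by rw [Algebra.smul_def]; exact hψr
            rw [h1]
            have h2 : (1 : R) ⊗ₜ[K] (k • ψ a)
                = (algebraMap K R k) • ((1 : R) ⊗ₜ[K] (ψ a)) := by
              rw [TensorProduct.tmul_smul, algebraMap_smul]
            rw [h2, ← TensorProduct.smul_tmul, ← Submodule.Quotient.mk_smul,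
              TensorProduct.smul_tmul']
            apply (Submodule.Quotient.eq _).mpr
            rw [← TensorProduct.sub_tmul, ← sub_smul, ← TensorProduct.smul_tmul']
            have hk' : algebraMap K R k - r ∈ IsLocalRing.maximalIdeal R := by
              have hneg := (IsLocalRing.maximalIdeal R).neg_mem hk
              rwa [neg_sub] at hneg
            exact Submodule.smul_mem_smul hk' trivial }
      map_add' := fun i j => by
        ext a
        simp only [LinearMap.coe_mk, AddHom.coe_mk, LinearMap.add_apply]
        rw [TensorProduct.add_tmul, ← Submodule.Quotient.mk_add]
      map_smul' := fun r i => by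
        ext a
        simp only [LinearMap.coe_mk, AddHom.coe_mk, LinearMap.smul_apply, RingHom.id_apply]
        rw [← TensorProduct.smul_tmul', ← Submodule.Quotient.mk_smul] }

theorem betaFun_tmul (I : Ideal R) (i : I) (a : A) :
    betaFun ψ hψker hres I (i ⊗ₜ[R] a)
      = Submodule.Quotient.mk (i ⊗ₜ[R] ((1 : R) ⊗ₜ[K] (ψ a))) := rfl

theorem betaFun_kills (I : Ideal R) {z : I ⊗[R] A}
    (hz : z ∈ (IsLocalRing.maximalIdeal R) • (⊤ : Submodule R (I ⊗[R] A))) :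
    betaFun ψ hψker hres I z = 0 := by
  refine Submodule.smul_induction_on hz ?_ ?_
  · intro r hr w _
    rw [map_smul]
    obtain ⟨v, hv⟩ := Submodule.Quotient.mk_surjective _ (betaFun ψ hψker hres I w)
    rw [← hv, ← Submodule.Quotient.mk_smul]
    exact (Submodule.Quotient.mk_eq_zero _).mpr (Submodule.smul_mem_smul hr trivial)
  · intro a b ha hb
    rw [map_add, ha, hb, add_zero]

theorem betaFun_section (I : Ideal R) (ξ : I ⊗[R] (R ⊗[K] C)) :
    betaFun ψ hψker hres I
        ((LinearMap.lTensor I (Phi0 ψ hψsurj hψker).toLinearMap) ξ)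
      = Submodule.Quotient.mk ξ := by
  induction ξ using TensorProduct.induction_on with
  | zero => simp
  | tmul i t =>
    rw [LinearMap.lTensor_tmul]
    have h1 : betaFun ψ hψker hres I
        (i ⊗ₜ[R] ((Phi0 ψ hψsurj hψker).toLinearMap t))
        = Submodule.Quotient.mk (i ⊗ₜ[R] ((1 : R) ⊗ₜ[K] (ψ (Phi0 ψ hψsurj hψker t)))) := rfl
    rw [h1]
    apply (Submodule.Quotient.eq _).mpr
    rw [← TensorProduct.tmul_sub]
    refine tmul_mem_smulTop _ i ?_
    have hkey := key0 ψ hψsurj hψker hres t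
    have := Submodule.neg_mem _ hkey
    simpa using this
  | add x y hx hy =>
    rw [map_add, map_add, hx, hy, Submodule.Quotient.mk_add]

theorem mu_commute (I : Ideal R) (ξ : I ⊗[R] (R ⊗[K] C)) :
    muMap I ((LinearMap.lTensor I (Phi0 ψ hψsurj hψker).toLinearMap) ξ)
      = Phi0 ψ hψsurj hψker (muMap I ξ) := by
  induction ξ using TensorProduct.induction_on with
  | zero => simp
  | tmul i t =>
    rw [LinearMap.lTensor_tmul, muMap_tmul, muMap_tmul]
    exact (map_smul (Phi0 ψ hψsurj hψker).toLinearMap (i : R) t).symm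
  | add x y hx hy =>
    simp only [map_add, hx, hy]

include hres in
theorem inj_mod [Module.Flat R A] (n : ℕ) (t : R ⊗[K] C)
    (ht : Phi0 ψ hψsurj hψker t
      ∈ ((IsLocalRing.maximalIdeal R) ^ (n + 1)) • (⊤ : Submodule R A)) :
    t ∈ ((IsLocalRing.maximalIdeal R) ^ (n + 1)) • (⊤ : Submodule R (R ⊗[K] C)) := by
  induction n generalizing t with
  | zero =>
    rw [pow_one]
    exact inj_base ψ hψsurj hψker hres t (by rwa [pow_one] at ht)
  | succ n ih =>
    have ht1 : Phi0 ψ hψsurj hψker t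
        ∈ ((IsLocalRing.maximalIdeal R) ^ (n + 1)) • (⊤ : Submodule R A) :=
      Submodule.smul_mono_left (Ideal.pow_le_pow_right (by omega)) ht
    have ht' := ih t ht1
    obtain ⟨ξ, hξ⟩ := muMap_surj _ ht'
    have hpow : (IsLocalRing.maximalIdeal R) ^ (n + 2)
        = (IsLocalRing.maximalIdeal R) * (IsLocalRing.maximalIdeal R) ^ (n + 1) := by
      ring
    have htJ : Phi0 ψ hψsurj hψker t
        ∈ ((IsLocalRing.maximalIdeal R) * ((IsLocalRing.maximalIdeal R) ^ (n + 1)))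
          • (⊤ : Submodule R A) := by
      rwa [hpow] at ht
    obtain ⟨η, hηm, hη⟩ := exists_smulTop_tensor _ htJ
    have heq : (LinearMap.lTensor _ (Phi0 ψ hψsurj hψker).toLinearMap) ξ = η := by
      apply muMap_injective ((IsLocalRing.maximalIdeal R) ^ (n + 1))
      rw [mu_commute, hξ, hη]
    have hξ0 : (Submodule.Quotient.mk ξ :
        ((↥((IsLocalRing.maximalIdeal R) ^ (n + 1))) ⊗[R] (R ⊗[K] C)) ⧸
          ((IsLocalRing.maximalIdeal R) • (⊤ : Submodule R
            ((↥((IsLocalRing.maximalIdeal R) ^ (n + 1))) ⊗[R] (R ⊗[K] C))))) = 0 := by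
      rw [← betaFun_section ψ hψsurj hψker hres _ ξ, heq]
      exact betaFun_kills ψ hψker hres _ hηm
    have hξm : ξ ∈ (IsLocalRing.maximalIdeal R)
        • (⊤ : Submodule R ((↥((IsLocalRing.maximalIdeal R) ^ (n + 1))) ⊗[R] (R ⊗[K] C))) :=
      (Submodule.Quotient.mk_eq_zero _).mp hξ0
    have hfin := muMap_smul_mem _ hξm
    rw [hξ] at hfin
    rwa [hpow]

end Main4
section Main5
set_option linter.unusedSectionVars false

variable {K : Type u} [Field K]
  {R : Type u} [CommRing R] [Algebra K R] [IsLocalRing R]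
  {C : Type u} [CommRing C] [Algebra K C]
  {A : Type u} [CommRing A] [Algebra R A] [Algebra K A] [IsScalarTower K R A]
  (ψ : A →ₐ[K] C) (hψsurj : Function.Surjective ψ)
  (hψker : ∀ x : A, ψ x = 0 ↔ x ∈ (IsLocalRing.maximalIdeal R) • (⊤ : Submodule R A))
  (hres : Function.Bijective (algebraMap K (IsLocalRing.ResidueField R)))
  [Algebra.FormallySmooth K C] [IsAdicComplete (IsLocalRing.maximalIdeal R) A]
  [Module.Flat R A]

/-- The induced map on the `i`-th quotients. -/
noncomputable def phiQ (i : ℕ) :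
    ((R ⊗[K] C) ⧸ (Ideal.map (algebraMap R (R ⊗[K] C)) ((IsLocalRing.maximalIdeal R) ^ (i + 1))))
      →ₐ[R] (A ⧸ (Ideal.map (algebraMap R A) ((IsLocalRing.maximalIdeal R) ^ (i + 1)))) :=
  Ideal.quotientMapₐ _ (Phi0 ψ hψsurj hψker) (by
    rw [Ideal.map_le_iff_le_comap]
    intro x hx
    simp only [Ideal.mem_comap]
    show Phi0 ψ hψsurj hψker (algebraMap R (R ⊗[K] C) x) ∈ _
    rw [AlgHom.commutes]
    exact Ideal.mem_map_of_mem _ hx)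

theorem phiQ_mk (i : ℕ) (t : R ⊗[K] C) :
    phiQ ψ hψsurj hψker i (Ideal.Quotient.mk _ t)
      = Ideal.Quotient.mk _ (Phi0 ψ hψsurj hψker t) := by
  simp [phiQ, Ideal.quotientMapₐ, Ideal.quotientMap_mk]
  rfl

theorem phiQ_surjective (i : ℕ) : Function.Surjective (phiQ ψ hψsurj hψker i) := by
  intro y
  obtain ⟨a, rfl⟩ := Ideal.Quotient.mk_surjective y
  obtain ⟨t, ht⟩ := surj_mod ψ hψsurj hψker i a
  refine ⟨Ideal.Quotient.mk _ t, ?_⟩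
  rw [phiQ_mk, Ideal.Quotient.mk_eq_mk_iff_sub_mem]
  rw [mem_smulTop_iff] at ht
  have := (Ideal.map (algebraMap R A) ((IsLocalRing.maximalIdeal R) ^ (i + 1))).neg_mem ht
  rwa [neg_sub] at this

include hres in
theorem phiQ_injective (i : ℕ) : Function.Injective (phiQ ψ hψsurj hψker i) := by
  intro x y hxy
  obtain ⟨t, rfl⟩ := Ideal.Quotient.mk_surjective x
  obtain ⟨s, rfl⟩ := Ideal.Quotient.mk_surjective y
  rw [phiQ_mk, phiQ_mk, Ideal.Quotient.mk_eq_mk_iff_sub_mem] at hxy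
  rw [Ideal.Quotient.mk_eq_mk_iff_sub_mem]
  have hsub : Phi0 ψ hψsurj hψker (t - s)
      ∈ ((IsLocalRing.maximalIdeal R) ^ (i + 1)) • (⊤ : Submodule R A) := by
    rw [map_sub, mem_smulTop_iff]
    exact hxy
  have := inj_mod ψ hψsurj hψker hres i (t - s) hsub
  rwa [mem_smulTop_iff] at this

theorem trans_phiQ (i : ℕ)
    (x : (R ⊗[K] C) ⧸ (Ideal.map (algebraMap R (R ⊗[K] C))
      ((IsLocalRing.maximalIdeal R) ^ (i + 2)))) :
    transitionMap R (IsLocalRing.maximalIdeal R) A i (phiQ ψ hψsurj hψker (i + 1) x)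
      = phiQ ψ hψsurj hψker i
          (transitionMap R (IsLocalRing.maximalIdeal R) (R ⊗[K] C) i x) := by
  obtain ⟨t, rfl⟩ := Ideal.Quotient.mk_surjective x
  rw [phiQ_mk, transitionMap_mk, transitionMap_mk, phiQ_mk]

/-- The map between the two completions. -/
noncomputable def PsiHom :
    (adicCompletionAlg R (IsLocalRing.maximalIdeal R) (R ⊗[K] C)) →ₐ[R]
      (adicCompletionAlg R (IsLocalRing.maximalIdeal R) A) :=
  AlgHom.codRestrict
    (Pi.algHom R
      (fun i => A ⧸ (Ideal.map (algebraMap R A) ((IsLocalRing.maximalIdeal R) ^ (i + 1))))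
      (fun i => (phiQ ψ hψsurj hψker i).comp
        ((Pi.evalAlgHom R _ i).comp
          (adicCompletionAlg R (IsLocalRing.maximalIdeal R) (R ⊗[K] C)).val))) _
    (fun x i => by
      have hx : ∀ j, transitionMap R (IsLocalRing.maximalIdeal R) (R ⊗[K] C) j
          (x.1 (j + 1)) = x.1 j := x.2
      show transitionMap R (IsLocalRing.maximalIdeal R) A i
          (phiQ ψ hψsurj hψker (i + 1) (x.1 (i + 1)))
        = phiQ ψ hψsurj hψker i (x.1 i)
      rw [trans_phiQ, hx i])

theorem PsiHom_apply (x : adicCompletionAlg R (IsLocalRing.maximalIdeal R) (R ⊗[K] C))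
    (i : ℕ) :
    (PsiHom ψ hψsurj hψker x).1 i = phiQ ψ hψsurj hψker i (x.1 i) := rfl

include hres in
theorem PsiHom_bijective : Function.Bijective (PsiHom ψ hψsurj hψker) := by
  constructor
  · intro x y hxy
    apply Subtype.ext
    funext i
    exact phiQ_injective ψ hψsurj hψker hres i (congrFun (congrArg Subtype.val hxy) i)
  · rintro ⟨y, hy⟩
    choose x hx using fun i => phiQ_surjective ψ hψsurj hψker i (y i)
    have hmem : (fun i => x i) ∈ adicCompletionAlg R (IsLocalRing.maximalIdeal R) (R ⊗[K] C) := by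
      intro i
      apply phiQ_injective ψ hψsurj hψker hres i
      rw [← trans_phiQ, hx (i + 1), hx i]
      exact hy i
    exact ⟨⟨fun i => x i, hmem⟩, Subtype.ext (funext fun i => hx i)⟩

end Main5


/-- Let `K` be a field of characteristic `0`, `(R, 𝔪)` a parameter
`K`-algebra, and `C` a smooth integral commutative `K`-algebra.  Let `A` be a commutative
`R`-algebra which is flat and `𝔪`-adically complete as an `R`-module, with a `K`-algebra
isomorphism `K ⊗_R A ≅ C` (encoded by the surjective augmentation `ψ : A → C` with kernel
`𝔪A`).  Then there is an isomorphism of `R`-algebras `R ⊗̂ C ≅ A` commuting with the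
augmentations to `C`, where `R ⊗̂ C` is the `𝔪`-adic completion of `R ⊗_K C`, whose
augmentation sends (the image of) `1 ⊗ c` to `c`. -/
theorem stmt_17
    (K : Type u) [Field K] [CharZero K]
    (R : Type u) [CommRing R] [Algebra K R] [IsLocalRing R] [IsNoetherianRing R]
    (hres : Function.Bijective (algebraMap K (IsLocalRing.ResidueField R)))
    [IsAdicComplete (IsLocalRing.maximalIdeal R) R]
    (C : Type u) [CommRing C] [Algebra K C] [IsDomain C] [Algebra.Smooth K C]
    (A : Type u) [CommRing A] [Algebra R A] [Algebra K A] [IsScalarTower K R A]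
    [Module.Flat R A] [IsAdicComplete (IsLocalRing.maximalIdeal R) A]
    (ψ : A →ₐ[K] C) (hψsurj : Function.Surjective ψ)
    (hψker : ∀ x : A, ψ x = 0 ↔ x ∈ (IsLocalRing.maximalIdeal R) • (⊤ : Submodule R A)) :
    ∃ Φ : (adicCompletionAlg R (IsLocalRing.maximalIdeal R) (R ⊗[K] C)) ≃ₐ[R] A,
      ∀ (c : C) (h : (fun i => Ideal.Quotient.mk
            (Ideal.map (algebraMap R (R ⊗[K] C)) ((IsLocalRing.maximalIdeal R) ^ (i + 1)))
            ((1 : R) ⊗ₜ[K] c)) ∈ adicCompletionAlg R (IsLocalRing.maximalIdeal R) (R ⊗[K] C)),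
        ψ (Φ ⟨_, h⟩) = c := by
  classical
  let eA : A ≃ₐ[R] adicCompletionAlg R (IsLocalRing.maximalIdeal R) A :=
    AlgEquiv.ofBijective (toCompletion (IsLocalRing.maximalIdeal R))
      (toCompletion_bijective (IsLocalRing.maximalIdeal R))
  let PsiE := AlgEquiv.ofBijective (PsiHom ψ hψsurj hψker)
    (PsiHom_bijective ψ hψsurj hψker hres)
  refine ⟨PsiE.trans eA.symm, ?_⟩
  intro c h
  have hPsi : PsiHom ψ hψsurj hψker ⟨_, h⟩
      = toCompletion (IsLocalRing.maximalIdeal R) (Gfun ψ hψsurj hψker c) := by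
    apply Subtype.ext
    funext i
    rw [PsiHom_apply ψ hψsurj hψker]
    show phiQ ψ hψsurj hψker i (Ideal.Quotient.mk _ ((1 : R) ⊗ₜ[K] c))
      = Ideal.Quotient.mk _ (Gfun ψ hψsurj hψker c)
    rw [phiQ_mk]
    congr 1
    rw [Phi0_tmul, map_one, one_mul]
  have hval : (PsiE.trans eA.symm) ⟨_, h⟩ = Gfun ψ hψsurj hψker c := by
    show eA.symm (PsiE ⟨_, h⟩) = _
    have h1 : PsiE ⟨_, h⟩ = PsiHom ψ hψsurj hψker ⟨_, h⟩ := rfl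
    rw [h1, hPsi]
    have h2 : toCompletion (IsLocalRing.maximalIdeal R) (Gfun ψ hψsurj hψker c)
        = eA (Gfun ψ hψsurj hψker c) := rfl
    rw [h2, AlgEquiv.symm_apply_apply]
  rw [hval]
  exact psi_Gfun ψ hψsurj hψker c
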